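/- Let R be a noetherian normal (integrally closed) domain and M a finitely generated R-module. Then char_R(M) = (Fitt^0_R(M))**, the reflexive hull of the zeroth Fitting ideal of M. -/

import Mathlib

open Module

section Defs
variable (R : Type*) [CommRing R]

/-- The `r`-th exterior bi-dual `⋂^r_R M := (⋀^r_R (M^*))^*`, realized canonically as the
module of alternating `R`-multilinear forms on `r` copies of the dual module `M^*`. -/
abbrev ExtBidual (M : Type*) [AddCommGroup M] [Module R M] (r : ℕ) :=
  (Module.Dual R M) [⋀^Fin r]→ₗ[R] R

/-- Functoriality of the exterior bi-dual. -/
noncomputable def extBidualMap {M N : Type*} [AddCommGroup M] [Module R M]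
    [AddCommGroup N] [Module R N] (r : ℕ) (f : M →ₗ[R] N) :
    ExtBidual R M r →ₗ[R] ExtBidual R N r where
  toFun φ := φ.compLinearMap f.dualMap
  map_add' := by intros; ext; rfl
  map_smul' := by intros; ext; rfl

/-- The canonical identification `⋂^s_R (R^s) = R`, given by evaluation at the
standard dual basis. -/
noncomputable def extEval (s : ℕ) : ExtBidual R (Fin s → R) s →ₗ[R] R where
  toFun φ := φ (fun i => LinearMap.proj i)
  map_add' := by intros; rfl
  map_smul' := by intros; rfl

/-- The characteristic ideal of `M` computed from a presentation `0 → N → R^s → M → 0`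
with kernel `N`: the image of the induced map `⋂^s_R N → ⋂^s_R R^s = R`. -/
noncomputable def charIdealAux (s : ℕ) (N : Submodule R (Fin s → R)) : Ideal R :=
  LinearMap.range ((extEval R s) ∘ₗ (extBidualMap R s N.subtype))

/-- The zeroth Fitting ideal of `M` computed from a presentation `0 → N → R^s → M → 0`
with kernel `N`: the ideal generated by determinants of `s × s` matrices with columns in `N`. -/
def fittIdealAux (s : ℕ) (N : Submodule R (Fin s → R)) : Ideal R :=
  Ideal.span { x | ∃ v : Fin s → (Fin s → R), (∀ i, v i ∈ N) ∧ x = (Matrix.of v).det }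
end Defs

section Defs2
variable (R : Type*) [CommRing R]

/-- `DepthGE A n` : the local ring `A` has depth at least `n`, i.e. there is a regular
sequence of length `n` contained in the maximal ideal. -/
def DepthGE (A : Type*) [CommRing A] [IsLocalRing A] (n : ℕ) : Prop :=
  ∃ rs : List A, rs.length = n ∧ (∀ r ∈ rs, r ∈ IsLocalRing.maximalIdeal A) ∧
    RingTheory.Sequence.IsRegular A rs

/-- The height of a prime ideal. -/
noncomputable def primeHt (𝔯 : Ideal R) (h : 𝔯.IsPrime) : ℕ∞ :=
  Order.height (⟨𝔯, h⟩ : PrimeSpectrum R)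

/-- Condition (G₀): the localization of `R` at every prime of height `0` is Gorenstein
(for a zero-dimensional local ring, Gorenstein means self-injective). -/
def CondG0 : Prop :=
  ∀ (𝔯 : Ideal R) (h : 𝔯.IsPrime), primeHt R 𝔯 h ≤ 0 →
    Module.Injective (Localization.AtPrime 𝔯) (Localization.AtPrime 𝔯)

/-- Serre's condition (Sₙ): `depth R_𝔯 ≥ min {n, ht 𝔯}` for every prime `𝔯`. -/
def CondS (n : ℕ) : Prop :=
  ∀ (𝔯 : Ideal R) (h : 𝔯.IsPrime) (m : ℕ),
    (m : ℕ∞) ≤ min (n : ℕ∞) (primeHt R 𝔯 h) → DepthGE (Localization.AtPrime 𝔯) m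

/-- The canonical map `I** → R** = R` for an ideal `I ⊆ R`. -/
noncomputable def bidualToRing (I : Ideal R) :
    Module.Dual R (Module.Dual R I) →ₗ[R] R where
  toFun φ := φ ((Submodule.subtype I).dualMap (LinearMap.id : R →ₗ[R] R))
  map_add' := by intros; rfl
  map_smul' := by intros; rfl
end Defs2

/-!
Write `N ⊆ Rˢ` for the kernel of the presentation and fix `v ∈ Nˢ` with `δ = det v ≠ 0`; if there
is none, both sides vanish, because the coordinate functionals `p` on `N` are then linearly
dependent and the Fitting ideal is zero. Cramer's rule `δ • η = ∑ⱼ η (vⱼ) • θⱼ` in `N*` gives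
`δ Λ(η) = det (ηᵢ (vⱼ)) Λ(p)` for every `Λ ∈ ⋂ˢ N`, so
`char N = {c | δ ∣ c · det (ηᵢ (vⱼ)) for all η}`, while `Fitt** = (δ) : ((δ) : Fitt)`.
Since each `det (ηᵢ (vⱼ))` lies in `(δ) : Fitt`, `Fitt** ⊆ char N`.
Conversely let `c ∈ char N`, `r ∈ (δ) : Fitt`, and suppose `δ ∤ cr`. An associated prime
`P = (δ) : u` of `R/(δ)` contains `(δ) : cr`, and normality makes `R_P` a discrete valuation ring.
Then `N_P` is free of rank `s`, and clearing denominators in a basis and in its coordinate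
functionals gives `w, η` with `det (ηᵢ (wₖ)) ∉ P`, although `cr · det (ηᵢ (wₖ)) ∈ (δ)`.
-/

theorem AlternatingMap.map_sum_smul_eq_det_mul {R M ι : Type*} [CommRing R] [AddCommGroup M]
    [Module R M] [Fintype ι] [DecidableEq ι] (f : M [⋀^ι]→ₗ[R] R) (A : Matrix ι ι R)
    (x : ι → M) : f (fun i => ∑ j, A i j • x j) = A.det * f x := by
  have h := (f.compLinearMap (Fintype.linearCombination R x)).eq_smul_basis_det (Pi.basisFun R ι)
  calc f (fun i => ∑ j, A i j • x j)
      = f.compLinearMap (Fintype.linearCombination R x) (fun i => A i) := by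
        simp [Fintype.linearCombination_apply]
    _ = A.det * f x := by
        rw [h, AlternatingMap.smul_apply, Pi.basisFun_det_apply, smul_eq_mul, mul_comm,
          AlternatingMap.compLinearMap_apply]
        congr 2
        funext i
        simp [Fintype.linearCombination_apply_single]

theorem mul_toSpanNonzeroSingleton_symm_apply {R : Type*} [CommRing R] [IsDomain R] {δ : R}
    (hδ : δ ≠ 0) (y : R ∙ δ) :
    δ * (LinearEquiv.toSpanNonzeroSingleton R R δ hδ).symm y = y := by
  rw [← congrArg Subtype.val ((LinearEquiv.toSpanNonzeroSingleton R R δ hδ).apply_symm_apply y)]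
  exact mul_comm _ _

theorem LinearMap.exists_mul_eq_of_forall_dvd {R M : Type*} [CommRing R] [IsDomain R]
    [AddCommGroup M] [Module R M] {δ : R} (hδ : δ ≠ 0) (f : M →ₗ[R] R) (h : ∀ x, δ ∣ f x) :
    ∃ g : M →ₗ[R] R, ∀ x, δ * g x = f x :=
  ⟨(LinearEquiv.toSpanNonzeroSingleton R R δ hδ).symm.toLinearMap ∘ₗ
      f.codRestrict _ fun x => Ideal.mem_span_singleton.mpr (h x),
    fun _ => mul_toSpanNonzeroSingleton_symm_apply hδ _⟩

theorem AlternatingMap.exists_mul_eq_of_forall_dvd {R M ι : Type*} [CommRing R] [IsDomain R]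
    [AddCommGroup M] [Module R M] {δ : R} (hδ : δ ≠ 0) (f : M [⋀^ι]→ₗ[R] R)
    (h : ∀ x, δ ∣ f x) : ∃ g : M [⋀^ι]→ₗ[R] R, ∀ x, δ * g x = f x :=
  ⟨(LinearEquiv.toSpanNonzeroSingleton R R δ hδ).symm.toLinearMap.compAlternatingMap
      (f.codRestrict _ fun x => Ideal.mem_span_singleton.mpr (h x)),
    fun _ => mul_toSpanNonzeroSingleton_symm_apply hδ _⟩

theorem Ideal.dvd_mul_of_mem_span {R : Type*} [CommRing R] {S : Set R} {a b x : R}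
    (h : ∀ y ∈ S, a ∣ b * y) (hx : x ∈ Ideal.span S) : a ∣ b * x := by
  induction hx using Submodule.span_induction with
  | mem y hy => exact h y hy
  | zero => simp
  | add y z _ _ hy hz => rw [mul_add]; exact dvd_add hy hz
  | smul c y _ hy => rw [smul_eq_mul, mul_left_comm]; exact hy.mul_left c

theorem Module.Dual.apply_mul_eq_mul_apply {R : Type*} [CommRing R] {I : Ideal R}
    (f : Dual R I) {a b : R} (ha : a ∈ I) (hb : b ∈ I) : f ⟨a, ha⟩ * b = a * f ⟨b, hb⟩ := by
  rw [mul_comm, ← smul_eq_mul, ← map_smul, ← smul_eq_mul a, ← map_smul]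
  congr 1
  ext
  exact mul_comm b a

theorem mem_range_bidualToRing_iff {R : Type*} [CommRing R] [IsDomain R] {I : Ideal R} {δ : R}
    (hδ : δ ≠ 0) (hδI : δ ∈ I) {t : R} :
    t ∈ LinearMap.range (bidualToRing R I) ↔ ∀ r, (∀ x ∈ I, δ ∣ r * x) → δ ∣ t * r := by
  let ι : Dual R I := I.subtype.dualMap LinearMap.id
  constructor
  · rintro ⟨φ, rfl⟩ r hr
    obtain ⟨f, hf⟩ := LinearMap.exists_mul_eq_of_forall_dvd hδ (r • ι) fun x => hr x x.2
    have hfι : δ • f = r • ι := LinearMap.ext hf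
    refine ⟨φ f, ?_⟩
    change φ ι * r = δ * φ f
    rw [mul_comm, ← smul_eq_mul, ← map_smul, ← hfι, map_smul, smul_eq_mul]
  · intro h
    have hdvd : ∀ f : Dual R I, δ ∣ (t • LinearMap.applyₗ (⟨δ, hδI⟩ : I)) f := fun f =>
      h (f ⟨δ, hδI⟩) fun x hx => ⟨f ⟨x, hx⟩, f.apply_mul_eq_mul_apply hδI hx⟩
    obtain ⟨φ, hφ⟩ := LinearMap.exists_mul_eq_of_forall_dvd hδ _ hdvd
    refine ⟨φ, mul_left_cancel₀ hδ ?_⟩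
    rw [bidualToRing, LinearMap.coe_mk, AddHom.coe_mk, hφ]
    exact mul_comm t δ

theorem range_bidualToRing_bot {R : Type*} [CommRing R] :
    LinearMap.range (bidualToRing R ⊥) = ⊥ := by
  refine LinearMap.range_eq_bot.mpr (LinearMap.ext fun φ => ?_)
  have : (Submodule.subtype ⊥).dualMap (LinearMap.id : R →ₗ[R] R) = 0 :=
    LinearMap.ext fun x => by simp [Subsingleton.elim x 0]
  change φ _ = 0
  rw [this, map_zero]

theorem exists_isPrime_forall_mem_iff_dvd {R : Type*} [CommRing R] [IsNoetherianRing R]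
    {δ a : R} (h : ¬δ ∣ a) :
    ∃ (P : Ideal R) (u : R), P.IsPrime ∧ (∀ z, z ∈ P ↔ δ ∣ u * z) ∧ ∀ z, δ ∣ a * z → z ∈ P := by
  have hcolon : ∀ b z : R,
      z ∈ (⊥ : Submodule R (R ⧸ Ideal.span {δ})).colon {Ideal.Quotient.mk _ b} ↔ δ ∣ b * z := by
    intro b z
    rw [Submodule.mem_colon_singleton, Submodule.mem_bot, Algebra.smul_def,
      Ideal.Quotient.algebraMap_eq, ← map_mul, Ideal.Quotient.eq_zero_iff_mem,
      Ideal.mem_span_singleton, mul_comm]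
  have hx : Ideal.Quotient.mk (Ideal.span {δ}) a ≠ 0 := by
    rwa [Ne, Ideal.Quotient.eq_zero_iff_mem, Ideal.mem_span_singleton]
  obtain ⟨P, hP, hle⟩ := exists_le_isAssociatedPrime_of_isNoetherianRing R _ hx
  obtain ⟨hPprime, y, rfl⟩ := isAssociatedPrime_iff.mp hP
  obtain ⟨u, rfl⟩ := Ideal.Quotient.mk_surjective y
  exact ⟨_, u, hPprime, hcolon u, fun z hz => hle ((hcolon a z).mpr hz)⟩

theorem IsLocalization.exists_dvd_mul_of_map_dvd {R S : Type*} [CommRing R] [CommRing S]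
    [Algebra R S] (M : Submonoid R) [IsLocalization M S] {a b : R}
    (h : algebraMap R S a ∣ algebraMap R S b) : ∃ m ∈ M, a ∣ b * m := by
  obtain ⟨y, hy⟩ := h
  obtain ⟨⟨e, m⟩, rfl⟩ := IsLocalization.mk'_surjective M y
  have : algebraMap R S (b * m) = algebraMap R S (a * e) := by
    rw [map_mul, hy, mul_assoc, IsLocalization.mk'_spec, map_mul]
  obtain ⟨c, hc⟩ := (IsLocalization.eq_iff_exists M S).mp this
  exact ⟨m * c, mul_mem m.2 c.2, e * c, by linear_combination hc⟩

theorem dvd_of_forall_mem_exists_mul_eq {A : Type*} [CommRing A] [IsDomain A]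
    [IsIntegrallyClosed A] {I : Ideal A} (hI : I ≠ ⊥) (hIfg : I.FG) {b u : A} (hb : b ≠ 0)
    (h : ∀ z ∈ I, ∃ q ∈ I, u * z = b * q) : b ∣ u := by
  let K := FractionRing A
  let M := Submodule.map (Algebra.linearMap A K) I
  have hbK : algebraMap A K b ≠ 0 := IsFractionRing.to_map_ne_zero_of_mem_nonZeroDivisors
    (mem_nonZeroDivisors_of_ne_zero hb)
  have hM : M ≠ ⊥ := by
    obtain ⟨z, hz, hz0⟩ := Submodule.exists_mem_ne_zero_of_ne_bot hI
    exact (Submodule.ne_bot_iff _).mpr ⟨_, ⟨z, hz, rfl⟩,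
      IsFractionRing.to_map_ne_zero_of_mem_nonZeroDivisors (mem_nonZeroDivisors_of_ne_zero hz0)⟩
  have hint : IsIntegral A (algebraMap A K u / algebraMap A K b) := by
    refine isIntegral_of_smul_mem_submodule M hM (Submodule.FG.map _ hIfg) _ ?_
    rintro _ ⟨z, hz, rfl⟩
    obtain ⟨q, hq, hqz⟩ := h z hz
    refine ⟨q, hq, ?_⟩
    simp only [Algebra.linearMap_apply, smul_eq_mul]
    rw [div_mul_eq_mul_div, eq_div_iff hbK, ← map_mul, ← map_mul, hqz, mul_comm]
  obtain ⟨y, hy⟩ := IsIntegrallyClosed.algebraMap_eq_of_integral hint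
  refine ⟨y, IsFractionRing.injective A K ?_⟩
  rw [map_mul, hy, mul_div_cancel₀ _ hbK]

/-- Unless `u / b` maps `m` into itself (then it is integral, hence in `A`), `(u / b) z` is a unit
for some `z ∈ m`, and that `z` generates `m`. -/
theorem IsLocalRing.maximalIdeal_isPrincipal_of_forall_dvd_mul {A : Type*} [CommRing A]
    [IsDomain A] [IsLocalRing A] [IsNoetherianRing A] [IsIntegrallyClosed A] {b u : A}
    (hb : b ≠ 0) (hu : ¬b ∣ u) (h : ∀ z ∈ maximalIdeal A, b ∣ u * z) :
    (maximalIdeal A).IsPrincipal := by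
  by_cases hbot : maximalIdeal A = ⊥
  · rw [hbot]; exact bot_isPrincipal
  by_cases hstab : ∀ z ∈ maximalIdeal A, ∃ q ∈ maximalIdeal A, u * z = b * q
  · exact absurd (dvd_of_forall_mem_exists_mul_eq hbot (IsNoetherian.noetherian _) hb hstab) hu
  push Not at hstab
  obtain ⟨z, hz, hzq⟩ := hstab
  obtain ⟨q, hq⟩ := h z hz
  have hqu : IsUnit q := IsLocalRing.notMem_maximalIdeal.mp fun hqm => hzq q hqm hq
  have hu0 : u ≠ 0 := by rintro rfl; exact hu (dvd_zero b)
  refine ⟨z, le_antisymm (fun y hy => ?_) ((Ideal.span_singleton_le_iff_mem _).mpr hz)⟩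
  obtain ⟨q', hq'⟩ := h y hy
  refine Ideal.mem_span_singleton'.mpr ⟨q' * ↑hqu.unit⁻¹, ?_⟩
  have : q * y = z * q' := mul_left_cancel₀ hu0 (by linear_combination q * hq' - q' * hq)
  calc q' * ↑hqu.unit⁻¹ * z = ↑hqu.unit⁻¹ * (q * y) := by rw [this]; ring
    _ = y := by rw [← mul_assoc, IsUnit.val_inv_mul, one_mul]

theorem isPrincipalIdealRing_localization_of_forall_mem_iff_dvd {R : Type*} [CommRing R]
    [IsDomain R] [IsNoetherianRing R] [IsIntegrallyClosed R] (P : Ideal R) [P.IsPrime]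
    {δ u : R} (hδ : δ ≠ 0) (hP : ∀ z, z ∈ P ↔ δ ∣ u * z) :
    IsPrincipalIdealRing (Localization.AtPrime P) := by
  let A := Localization.AtPrime P
  have : IsNoetherianRing A := IsLocalization.isNoetherianRing P.primeCompl A inferInstance
  have : IsIntegrallyClosed A :=
    isIntegrallyClosed_of_isLocalization A P.primeCompl P.primeCompl_le_nonZeroDivisors
  refine ((tfae_of_isNoetherianRing_of_isLocalRing_of_isDomain A).out 4 0).mp ?_
  refine IsLocalRing.maximalIdeal_isPrincipal_of_forall_dvd_mul (b := algebraMap R A δ)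
    (u := algebraMap R A u) ?_ ?_ ?_
  · exact (IsLocalization.to_map_eq_zero_iff A P.primeCompl_le_nonZeroDivisors).not.mpr hδ
  · intro hdvd
    obtain ⟨m, hm, hdm⟩ := IsLocalization.exists_dvd_mul_of_map_dvd P.primeCompl hdvd
    exact hm ((hP m).mpr hdm)
  · rw [← Localization.AtPrime.map_eq_maximalIdeal, Ideal.map]
    intro z hz
    refine Ideal.dvd_mul_of_mem_span ?_ hz
    rintro _ ⟨p, hp, rfl⟩
    rw [← map_mul]
    exact map_dvd _ ((hP p).mp hp)

theorem IsLocalizedModule.exists_dual_smul_eq {R A M M' : Type*} [CommRing R] [CommRing A]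
    [Algebra R A] (S : Submonoid R) [IsLocalization S A] [AddCommGroup M] [Module R M]
    [Module.FinitePresentation R M] [AddCommGroup M'] [Module R M'] [Module A M']
    [IsScalarTower R A M'] (f : M →ₗ[R] M') [IsLocalizedModule S f] (φ : M' →ₗ[A] A) :
    ∃ (η : Dual R M) (t : S), ∀ m, algebraMap R A (η m) = (t : R) • φ (f m) := by
  obtain ⟨⟨η, t⟩, h⟩ := IsLocalizedModule.surj S
    (IsLocalizedModule.map S f (Algebra.linearMap R A)) (φ.restrictScalars R)
  refine ⟨η, t, fun m => ?_⟩
  have := LinearMap.congr_fun h (f m)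
  rw [IsLocalizedModule.map_apply] at this
  exact this.symm

theorem exists_det_ne_zero_of_span_eq_top {K : Type*} [Field K] {s : ℕ} {S : Set (Fin s → K)}
    (h : Submodule.span K S = ⊤) :
    ∃ w : Fin s → Fin s → K, (∀ i, w i ∈ S) ∧ (Matrix.of w).det ≠ 0 := by
  obtain ⟨B, hBS, hspan, hli⟩ := exists_linearIndependent K S
  let b := Basis.mk hli (by rw [Subtype.range_coe, hspan, h])
  have : Fintype B := FiniteDimensional.fintypeBasisIndex b
  have hcard : Fintype.card B = s := by simpa using (Module.finrank_eq_card_basis b).symm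
  let e := (Fintype.equivFinOfCardEq hcard).symm
  refine ⟨fun i => e i, fun i => hBS (e i).2, ?_⟩
  exact (Matrix.isUnit_iff_isUnit_det _).mp
    (Matrix.linearIndependent_rows_iff_isUnit.mp (hli.comp e e.injective)) |>.ne_zero

namespace CharFitt

section CommRing

variable {R : Type*} [CommRing R] {s : ℕ} (N : Submodule R (Fin s → R))

def coordDual : Fin s → Dual R N := fun i => LinearMap.proj i ∘ₗ N.subtype

theorem mem_charIdealAux_iff {c : R} :
    c ∈ charIdealAux R s N ↔ ∃ Λ : ExtBidual R N s, Λ (coordDual N) = c :=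
  Iff.rfl

variable {N}

def tupleDet (w : Fin s → N) : R := (Matrix.of fun i => (w i : Fin s → R)).det

theorem tupleDet_mem_fittIdealAux (w : Fin s → N) : tupleDet w ∈ fittIdealAux R s N :=
  Ideal.subset_span ⟨_, fun i => (w i).2, rfl⟩

theorem fittIdealAux_eq_bot (h : ∀ w : Fin s → N, tupleDet w = 0) : fittIdealAux R s N = ⊥ := by
  rw [fittIdealAux, Ideal.span_eq_bot]
  rintro _ ⟨v, hv, rfl⟩
  exact h fun i => ⟨v i, hv i⟩

noncomputable def detForm (w : Fin s → N) : ExtBidual R N s :=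
  Matrix.detRowAlternating.compLinearMap (LinearMap.pi fun k => LinearMap.applyₗ (w k))

theorem detForm_apply (w : Fin s → N) (η : Fin s → Dual R N) :
    detForm w η = (Matrix.of fun i k => η i (w k)).det :=
  rfl

theorem detForm_coordDual (w : Fin s → N) : detForm w (coordDual N) = tupleDet w := by
  rw [detForm_apply, tupleDet, ← Matrix.det_transpose]
  rfl

noncomputable def cramerDual (w : Fin s → N) (j : Fin s) : Dual R N :=
  LinearMap.proj j ∘ₗ Matrix.cramer (Matrix.of fun i => (w i : Fin s → R)).transpose ∘ₗ N.subtype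

theorem tupleDet_smul_eq_sum (w : Fin s → N) (η : Dual R N) :
    tupleDet w • η = ∑ j, η (w j) • cramerDual w j := by
  ext n
  have hcramer : tupleDet w • (n : Fin s → R) = ∑ j, cramerDual w j n • (w j : Fin s → R) := by
    rw [tupleDet, ← Matrix.det_transpose, ← Matrix.mulVec_cramer, Matrix.mulVec_transpose,
      Matrix.vecMul_eq_sum]
    rfl
  have hcramer' : tupleDet w • n = ∑ j, cramerDual w j n • w j := by
    ext1; simpa using hcramer
  simp only [LinearMap.smul_apply, LinearMap.coe_sum, Finset.sum_apply]
  rw [← map_smul, hcramer', map_sum]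
  simp [mul_comm]

theorem tupleDet_pow_mul_apply (w : Fin s → N) (Λ : ExtBidual R N s) (η : Fin s → Dual R N) :
    tupleDet w ^ s * Λ η = detForm w η * Λ (cramerDual w) := by
  classical
  calc tupleDet w ^ s * Λ η = Λ (fun i => tupleDet w • η i) := by
        rw [← AlternatingMap.coe_multilinearMap, MultilinearMap.map_smul_univ]
        simp
    _ = detForm w η * Λ (cramerDual w) := by
        simp_rw [tupleDet_smul_eq_sum]
        exact Λ.map_sum_smul_eq_det_mul (Matrix.of fun i k => η i (w k)) (cramerDual w)

end CommRing

noncomputable def piAlgebraMap {R : Type*} [CommRing R] {s : ℕ} (A : Type*) [CommRing A]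
    [Algebra R A] : (Fin s → R) →ₗ[R] (Fin s → A) :=
  LinearMap.pi fun i => Algebra.linearMap R A ∘ₗ LinearMap.proj i

instance {R : Type*} [CommRing R] {s : ℕ} (A : Type*) [CommRing A] [Algebra R A]
    (S : Submonoid R) [IsLocalization S A] : IsLocalizedModule S (piAlgebraMap (s := s) A) :=
  IsLocalizedModule.pi S _

section Domain

variable {R : Type*} [CommRing R] [IsDomain R] {s : ℕ} {N : Submodule R (Fin s → R)}
  {v : Fin s → N}

theorem tupleDet_mul_apply (hv : tupleDet v ≠ 0) (Λ : ExtBidual R N s) (η : Fin s → Dual R N) :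
    tupleDet v * Λ η = detForm v η * Λ (coordDual N) := by
  have hη := tupleDet_pow_mul_apply v Λ η
  have hp := tupleDet_pow_mul_apply v Λ (coordDual N)
  rw [detForm_coordDual] at hp
  apply mul_left_cancel₀ (pow_ne_zero s hv)
  linear_combination tupleDet v * hη - detForm v η * hp

theorem tupleDet_mul_detForm (hv : tupleDet v ≠ 0) (w : Fin s → N) (η : Fin s → Dual R N) :
    tupleDet v * detForm w η = detForm v η * tupleDet w := by
  rw [tupleDet_mul_apply hv, detForm_coordDual]

theorem mem_charIdealAux_iff_dvd (hv : tupleDet v ≠ 0) {c : R} :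
    c ∈ charIdealAux R s N ↔ ∀ η, tupleDet v ∣ c * detForm v η := by
  rw [mem_charIdealAux_iff]
  constructor
  · rintro ⟨Λ, rfl⟩ η
    exact ⟨Λ η, by rw [mul_comm, ← tupleDet_mul_apply hv]⟩
  · intro h
    obtain ⟨Λ, hΛ⟩ := AlternatingMap.exists_mul_eq_of_forall_dvd hv (c • detForm v) h
    refine ⟨Λ, mul_left_cancel₀ hv ?_⟩
    rw [hΛ, AlternatingMap.smul_apply, detForm_coordDual, smul_eq_mul, mul_comm]

theorem dvd_detForm_mul_of_mem_fittIdealAux (hv : tupleDet v ≠ 0) (η : Fin s → Dual R N)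
    {x : R} (hx : x ∈ fittIdealAux R s N) : tupleDet v ∣ detForm v η * x := by
  refine Ideal.dvd_mul_of_mem_span ?_ hx
  rintro _ ⟨w, hw, rfl⟩
  exact ⟨_, (tupleDet_mul_detForm hv (fun i => ⟨w i, hw i⟩) η).symm⟩

theorem dvd_mul_mul_detForm (hv : tupleDet v ≠ 0) {c r : R}
    (hc : ∀ η, tupleDet v ∣ c * detForm v η) (hr : ∀ x ∈ fittIdealAux R s N, tupleDet v ∣ r * x)
    (w : Fin s → N) (η : Fin s → Dual R N) : tupleDet v ∣ c * r * detForm w η := by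
  have h := mul_dvd_mul (hc η) (hr _ (tupleDet_mem_fittIdealAux w))
  rw [show c * detForm v η * (r * tupleDet w) = tupleDet v * (c * r * detForm w η) by
    linear_combination c * r * (tupleDet_mul_detForm hv w η).symm] at h
  exact (mul_dvd_mul_iff_left hv).mp h

theorem finrank_localized'_eq (P : Ideal R) [P.IsPrime] (A : Type*) [CommRing A] [IsDomain A]
    [IsNoetherianRing A] [Algebra R A] [IsLocalization.AtPrime A P] (hv : tupleDet v ≠ 0) :
    finrank A (N.localized' A P.primeCompl (piAlgebraMap A)) = s := by
  refine le_antisymm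
    (by simpa using Submodule.finrank_le (N.localized' A P.primeCompl (piAlgebraMap A))) ?_
  have hdet : ((Matrix.of fun i => (v i : Fin s → R)).map (algebraMap R A)).det ≠ 0 := by
    rw [← RingHom.mapMatrix_apply, ← RingHom.map_det]
    exact (IsLocalization.to_map_eq_zero_iff A P.primeCompl_le_nonZeroDivisors).not.mpr hv
  have hli : LinearIndependent A
      (fun j => N.toLocalized' A P.primeCompl (piAlgebraMap A) (v j)) :=
    .of_comp (Submodule.subtype _) (Matrix.linearIndependent_rows_of_det_ne_zero hdet)
  simpa using hli.fintype_card_le_finrank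

theorem exists_detForm_apply_notMem [IsNoetherianRing R] (P : Ideal R) [P.IsPrime]
    (A : Type*) [CommRing A] [IsDomain A] [IsPrincipalIdealRing A] [Algebra R A]
    [IsLocalization.AtPrime A P] (hv : tupleDet v ≠ 0) :
    ∃ (w : Fin s → N) (η : Fin s → Dual R N), detForm w η ∉ P := by
  classical
  let ι := N.toLocalized' A P.primeCompl (piAlgebraMap A)
  let b := Module.finBasisOfFinrankEq A _ (finrank_localized'_eq P A hv)
  have hlift : ∀ k, ∃ (n : N) (t : P.primeCompl), (t : R) • b k = ι n := by
    intro k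
    obtain ⟨n, hn, t, ht⟩ := (Submodule.mem_localized' _ _ _ _ _).mp (b k).2
    refine ⟨⟨n, hn⟩, t, Subtype.ext ?_⟩
    rw [Submodule.coe_smul_of_tower, ← ht]
    exact IsLocalizedModule.mk'_cancel' _ n t
  choose w t hw using hlift
  have := Module.finitePresentation_of_finite R N
  choose η t' hη using fun i => IsLocalizedModule.exists_dual_smul_eq P.primeCompl ι (b.coord i)
  have hdiag : (Matrix.of fun i k => η i (w k)).map (algebraMap R A)
      = Matrix.diagonal fun i => algebraMap R A (t' i * t i) := by
    ext i k
    rw [Matrix.map_apply, Matrix.of_apply, hη, ← hw, LinearMap.map_smul_of_tower, b.coord_apply,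
      b.repr_self, Matrix.diagonal_apply, Finsupp.single_apply]
    rcases eq_or_ne k i with rfl | hki
    · simp [Algebra.smul_def]
    · simp [hki, hki.symm]
  have hunit : IsUnit (algebraMap R A (detForm w η)) := by
    rw [detForm_apply, RingHom.map_det, RingHom.mapMatrix_apply, hdiag, Matrix.det_diagonal]
    exact IsUnit.prod_univ_iff.mpr fun i => IsLocalization.map_units A (t' i * t i)
  exact ⟨w, η, (IsLocalization.AtPrime.isUnit_to_map_iff A P _).mp hunit⟩

theorem dvd_mul_of_forall_dvd [IsNoetherianRing R] [IsIntegrallyClosed R] (hv : tupleDet v ≠ 0)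
    {c r : R} (hc : ∀ η, tupleDet v ∣ c * detForm v η)
    (hr : ∀ x ∈ fittIdealAux R s N, tupleDet v ∣ r * x) : tupleDet v ∣ c * r := by
  by_contra hcr
  obtain ⟨P, u, hP, hPu, hPcr⟩ := exists_isPrime_forall_mem_iff_dvd hcr
  have := isPrincipalIdealRing_localization_of_forall_mem_iff_dvd P hv hPu
  obtain ⟨w, η, hwη⟩ := exists_detForm_apply_notMem P (Localization.AtPrime P) hv
  exact hwη (hPcr _ (dvd_mul_mul_detForm hv hc hr w η))

theorem span_image_piAlgebraMap_ne_top (h : ∀ w : Fin s → N, tupleDet w = 0) :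
    Submodule.span (FractionRing R) (piAlgebraMap (FractionRing R) '' (N : Set (Fin s → R)))
      ≠ ⊤ := by
  intro htop
  obtain ⟨w, hw, hdet⟩ := exists_det_ne_zero_of_span_eq_top htop
  choose n hn hnw using hw
  have : Matrix.of w
      = (Matrix.of fun i => ((⟨n i, hn i⟩ : N) : Fin s → R)).map (algebraMap R _) := by
    ext i k
    rw [Matrix.of_apply, ← hnw]
    rfl
  rw [this, ← RingHom.mapMatrix_apply, ← RingHom.map_det] at hdet
  exact hdet (by rw [← tupleDet, h, map_zero])

theorem exists_ne_zero_forall_dotProduct_eq_zero (h : ∀ w : Fin s → N, tupleDet w = 0) :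
    ∃ a : Fin s → R, a ≠ 0 ∧ ∀ n ∈ N, a ⬝ᵥ n = 0 := by
  classical
  let K := FractionRing R
  obtain ⟨φ, hφ0, hφ⟩ :=
    Submodule.exists_le_ker_of_lt_top _ (lt_top_iff_ne_top.mpr (span_image_piAlgebraMap_ne_top h))
  let e : Fin s → Fin s → K := fun i j => if i = j then 1 else 0
  obtain ⟨t, ht⟩ := IsLocalization.exist_integer_multiples (nonZeroDivisors R) Finset.univ (φ ∘ e)
  choose a ha using fun i => ht i (Finset.mem_univ i)
  have hcoef : ∀ x, φ x = ∑ i, x i * φ (e i) := fun x => by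
    simpa using φ.pi_apply_eq_sum_univ x
  refine ⟨a, fun ha0 => hφ0 (LinearMap.ext fun x => ?_), fun n hn => ?_⟩
  · have hzero : ∀ i, φ (e i) = 0 := fun i => by
      have := ha i
      rw [ha0, Pi.zero_apply, map_zero, eq_comm, smul_eq_zero] at this
      exact this.resolve_left (nonZeroDivisors.coe_ne_zero t)
    simp [hcoef x, hzero]
  · have hgn : φ (piAlgebraMap K n) = 0 := hφ (Submodule.subset_span ⟨n, hn, rfl⟩)
    rw [hcoef] at hgn
    apply IsFractionRing.injective R K
    calc algebraMap R K (a ⬝ᵥ n) = (t : R) • ∑ i, piAlgebraMap K n i * φ (e i) := by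
          simp only [dotProduct, map_sum, map_mul, Finset.smul_sum]
          refine Finset.sum_congr rfl fun i _ => ?_
          rw [ha, mul_comm, mul_smul_comm]
          rfl
      _ = algebraMap R K 0 := by rw [hgn, smul_zero, map_zero]

theorem charIdealAux_eq_bot (h : ∀ w : Fin s → N, tupleDet w = 0) : charIdealAux R s N = ⊥ := by
  obtain ⟨a, ha0, ha⟩ := exists_ne_zero_forall_dotProduct_eq_zero h
  have hdep : ¬LinearIndependent R (coordDual N) := by
    rw [Fintype.not_linearIndependent_iff]
    refine ⟨a, LinearMap.ext fun n => ?_, Function.ne_iff.mp ha0⟩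
    simpa [coordDual, dotProduct] using ha n n.2
  ext c
  rw [mem_charIdealAux_iff, Submodule.mem_bot]
  constructor
  · rintro ⟨Λ, rfl⟩
    exact Λ.map_linearDependent _ hdep
  · rintro rfl
    exact ⟨0, rfl⟩

end Domain

end CharFitt

open CharFitt in
theorem char_eq_reflexive_hull_of_fitt (R : Type*) [CommRing R] [IsDomain R]
    [IsIntegrallyClosed R] [IsNoetherianRing R]
    (M : Type*) [AddCommGroup M] [Module R M]
    (s : ℕ) (π : (Fin s → R) →ₗ[R] M) :
    charIdealAux R s (LinearMap.ker π)
      = LinearMap.range (bidualToRing R (fittIdealAux R s (LinearMap.ker π))) := by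
  by_cases hdeg : ∀ w : Fin s → LinearMap.ker π, tupleDet w = 0
  · rw [charIdealAux_eq_bot hdeg, fittIdealAux_eq_bot hdeg, range_bidualToRing_bot]
  push Not at hdeg
  obtain ⟨v, hv⟩ := hdeg
  ext c
  rw [mem_charIdealAux_iff_dvd hv, mem_range_bidualToRing_iff hv (tupleDet_mem_fittIdealAux v)]
  exact ⟨fun hc r hr => dvd_mul_of_forall_dvd hv hc hr,
    fun hc η => hc _ fun x hx => dvd_detForm_mul_of_mem_fittIdealAux hv η hx⟩
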